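/- arXiv:2601.13448 — 2 statements merged into one kernel-verified Lean document; each statement's English description precedes it below -/
import Mathlib

section
/- Under Assumptions U and F, if the stepsize satisfies τ ≤ 1/L^{ww}_{F,1}, then the deterministic BADR-GD iterates satisfy, for every t ≥ 0: ‖w_{t+1} − w*_{t+1}‖² ≤ (1 − τμ_F/2)‖w_t − w*_t‖² + (2/(τμ_F))(M_C/μ_F)²γ²‖D_{λ,t}‖². -/
/-!
One gradient step on the `μ`-strongly convex, `L`-smooth function `F(·, λ_t)` with `τ ≤ 1/L`
contracts the squared distance to `w*(λ_t)` by the factor `1 - τμ`: strong convexity bounds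
`⟪∇f(x), x - z⟫` from below, and the descent lemma bounds `‖∇f(x)‖²` by `2L (f x - f z)`.
The minimizer map is `M_C/μ`-Lipschitz on `C`, because strong monotonicity of `∇_w F(·, λ₂)` gives
`μ ‖w*(λ₁) - w*(λ₂)‖ ≤ ‖∇_w F(w*(λ₁), λ₂) - ∇_w F(w*(λ₁), λ₁)‖ ≤ M_C ‖λ₁ - λ₂‖`.
The triangle inequality and Young's inequality combine the two estimates.
-/

open MeasureTheory Finset

noncomputable section

/-- The model space `ℝ^d`. -/
abbrev Wsp (d : ℕ) : Type := EuclideanSpace ℝ (Fin d)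

/-- The weight space `ℝ^S`. -/
abbrev Lsp (S : ℕ) : Type := EuclideanSpace ℝ (Fin S)

/-- Partial gradient `∇_w G(w, λ)`. -/
noncomputable def gradW {d S : ℕ} (G : Wsp d → Lsp S → ℝ) (w : Wsp d) (l : Lsp S) : Wsp d :=
  gradient (fun w' => G w' l) w

/-- Partial gradient `∇_λ G(w, λ)`. -/
noncomputable def gradL {d S : ℕ} (G : Wsp d → Lsp S → ℝ) (w : Wsp d) (l : Lsp S) : Lsp S :=
  gradient (fun l' => G w l') l

/-- Hessian `∇²_{ww} G(w, λ)`, as a continuous linear map. -/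
noncomputable def hessWW {d S : ℕ} (G : Wsp d → Lsp S → ℝ) (w : Wsp d) (l : Lsp S) :
    Wsp d →L[ℝ] Wsp d :=
  fderiv ℝ (fun w' => gradW G w' l) w

/-- Cross Hessian `∇²_{wλ} G(w, λ)`, as a continuous linear map `ℝ^S →L ℝ^d`. -/
noncomputable def hessWL {d S : ℕ} (G : Wsp d → Lsp S → ℝ) (w : Wsp d) (l : Lsp S) :
    Lsp S →L[ℝ] Wsp d :=
  fderiv ℝ (fun l' => gradW G w l') l

section Smooth

open Set InnerProductSpace
open scoped RealInnerProductSpace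

variable {E : Type*} [NormedAddCommGroup E] [InnerProductSpace ℝ E] [CompleteSpace E]
  {f : E → ℝ} {g : E → E} {x z gx : E} {μ L τ : ℝ}

lemma ConvexOn.add_inner_sub_le (hf : ConvexOn ℝ univ f) (hgx : HasGradientAt f gx x) (y : E) :
    f x + ⟪gx, y - x⟫ ≤ f y := by
  have hφ : HasDerivAt (f ∘ (AffineMap.lineMap x y : ℝ → E)) ⟪gx, y - x⟫ 0 := by
    have hl : HasDerivAt (AffineMap.lineMap x y : ℝ → E) (y - x) 0 := AffineMap.hasDerivAt_lineMap
    have hx : HasFDerivAt f (toDual ℝ E gx) (AffineMap.lineMap x y (0 : ℝ)) := by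
      simpa using hgx.hasFDerivAt
    simpa using hx.comp_hasDerivAt (0 : ℝ) hl
  have hφconv : ConvexOn ℝ univ (f ∘ (AffineMap.lineMap x y : ℝ → E)) := by
    simpa using hf.comp_affineMap (AffineMap.lineMap x y)
  have := hφconv.le_slope_of_hasDerivAt (mem_univ 0) (mem_univ 1) one_pos hφ
  simp only [slope_def_field, Function.comp_apply, AffineMap.lineMap_apply_one,
    AffineMap.lineMap_apply_zero, sub_zero, div_one] at this
  linarith

lemma StrongConvexOn.add_inner_sub_add_le (hf : StrongConvexOn univ μ f)
    (hgx : HasGradientAt f gx x) (y : E) :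
    f x + ⟪gx, y - x⟫ + μ / 2 * ‖y - x‖ ^ 2 ≤ f y := by
  have hsq : HasGradientAt (fun z : E => μ / 2 * ‖z‖ ^ 2) (μ • x) x := by
    rw [hasGradientAt_iff_hasFDerivAt]
    refine ((hasStrictFDerivAt_norm_sq x).hasFDerivAt.const_mul (μ / 2)).congr_fderiv ?_
    ext v
    simp only [smul_apply, coe_innerSL_apply, nsmul_eq_mul, Nat.cast_ofNat,
      smul_eq_mul, map_smul, toDual_apply_apply]
    ring
  have hdiff : HasGradientAt (fun z => f z - μ / 2 * ‖z‖ ^ 2) (gx - μ • x) x := by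
    rw [hasGradientAt_iff_hasFDerivAt, map_sub]
    exact hgx.hasFDerivAt.sub hsq.hasFDerivAt
  have := (strongConvexOn_iff_convex.1 hf).add_inner_sub_le hdiff y
  rw [inner_sub_left, real_inner_smul_left, inner_sub_right, inner_sub_right,
    real_inner_self_eq_norm_sq] at this
  rw [inner_sub_right, norm_sub_sq_real, real_inner_comm x y]
  linarith

lemma StrongConvexOn.mul_norm_sub_sq_le_inner (hf : StrongConvexOn univ μ f) {a b ga gb : E}
    (hga : HasGradientAt f ga a) (hgb : HasGradientAt f gb b) :
    μ * ‖a - b‖ ^ 2 ≤ ⟪ga - gb, a - b⟫ := by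
  have hab := hf.add_inner_sub_add_le hga b
  have hba := hf.add_inner_sub_add_le hgb a
  rw [norm_sub_rev b a, ← neg_sub a b, inner_neg_right] at hab
  rw [inner_sub_left]
  linarith

lemma StrongConvexOn.mul_norm_sub_le_norm_sub (hf : StrongConvexOn univ μ f) {a b ga gb : E}
    (hga : HasGradientAt f ga a) (hgb : HasGradientAt f gb b) :
    μ * ‖a - b‖ ≤ ‖ga - gb‖ := by
  rcases (norm_nonneg (a - b)).eq_or_lt with h | h
  · rw [← h, mul_zero]; exact norm_nonneg _
  · have := (hf.mul_norm_sub_sq_le_inner hga hgb).trans (real_inner_le_norm _ _)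
    nlinarith

lemma le_add_inner_sub_add_of_lipschitz_gradient (hf : ∀ z, HasGradientAt f (g z) z)
    (hg : ∀ a b, ‖g a - g b‖ ≤ L * ‖a - b‖) (x y : E) :
    f y ≤ f x + ⟪g x, y - x⟫ + L / 2 * ‖y - x‖ ^ 2 := by
  set v := y - x
  let φ : ℝ → ℝ := fun t => f (AffineMap.lineMap x y t) - t * ⟪g x, v⟫ - L / 2 * t ^ 2 * ‖v‖ ^ 2
  have hφ : ∀ t, HasDerivAt φ (⟪g (AffineMap.lineMap x y t) - g x, v⟫ - L * t * ‖v‖ ^ 2) t := by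
    intro t
    have hl : HasDerivAt (AffineMap.lineMap x y : ℝ → E) v t := AffineMap.hasDerivAt_lineMap
    have h1 := (hf _).hasFDerivAt.comp_hasDerivAt t hl
    have h2 := ((hasDerivAt_id' t).mul_const ⟪g x, v⟫)
    have h3 := ((hasDerivAt_pow 2 t).const_mul (L / 2)).mul_const (‖v‖ ^ 2)
    refine ((h1.sub h2).sub h3).congr_deriv ?_
    simp only [toDual_apply_apply, inner_sub_left]
    ring
  have hanti : AntitoneOn φ (Icc 0 1) := by
    refine antitoneOn_of_deriv_nonpos (convex_Icc 0 1)
      (fun t _ => (hφ t).continuousAt.continuousWithinAt)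
      (fun t _ => (hφ t).differentiableAt.differentiableWithinAt) fun t ht => ?_
    rw [interior_Icc] at ht
    rw [(hφ t).deriv]
    have hlip : ‖g (AffineMap.lineMap x y t) - g x‖ ≤ L * (t * ‖v‖) := by
      have hsub : AffineMap.lineMap x y t - x = t • v := AffineMap.lineMap_vsub_left x y t
      simpa [hsub, norm_smul, abs_of_pos ht.1] using hg (AffineMap.lineMap x y t) x
    nlinarith [real_inner_le_norm (g (AffineMap.lineMap x y t) - g x) v, norm_nonneg v,
      mul_le_mul_of_nonneg_right hlip (norm_nonneg v)]
  have := hanti (left_mem_Icc.2 zero_le_one) (right_mem_Icc.2 zero_le_one) zero_le_one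
  simp only [φ, AffineMap.lineMap_apply_one, AffineMap.lineMap_apply_zero] at this
  linarith

lemma sq_norm_gradient_le_of_forall_le (hf : ∀ z, HasGradientAt f (g z) z)
    (hg : ∀ a b, ‖g a - g b‖ ≤ L * ‖a - b‖) (hL : 0 < L) (hz : ∀ w, f z ≤ f w) (x : E) :
    ‖g x‖ ^ 2 ≤ 2 * L * (f x - f z) := by
  have hstep := le_add_inner_sub_add_of_lipschitz_gradient hf hg x (x - L⁻¹ • g x)
  rw [sub_sub_cancel_left, inner_neg_right, real_inner_smul_right, real_inner_self_eq_norm_sq,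
    norm_neg, norm_smul, Real.norm_eq_abs, abs_inv, abs_of_pos hL] at hstep
  have hmin := hz (x - L⁻¹ • g x)
  have hdecrease : L⁻¹ * ‖g x‖ ^ 2 / 2 ≤ f x - f z := by
    have : L / 2 * (L⁻¹ * ‖g x‖) ^ 2 = L⁻¹ * ‖g x‖ ^ 2 / 2 := by field_simp
    linarith
  rw [inv_mul_eq_div, div_div, div_le_iff₀ (by positivity)] at hdecrease
  linarith

lemma norm_sub_smul_gradient_sub_sq_le (hsc : StrongConvexOn univ μ f)
    (hf : ∀ z, HasGradientAt f (g z) z) (hg : ∀ a b, ‖g a - g b‖ ≤ L * ‖a - b‖) (hL : 0 < L)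
    (hτ : 0 ≤ τ) (hτL : τ * L ≤ 1) (hz : ∀ w, f z ≤ f w) (x : E) :
    ‖x - τ • g x - z‖ ^ 2 ≤ (1 - τ * μ) * ‖x - z‖ ^ 2 := by
  have hgap : 0 ≤ f x - f z := sub_nonneg.2 (hz x)
  have hgrad := sq_norm_gradient_le_of_forall_le hf hg hL hz x
  have hinner : f x - f z + μ / 2 * ‖x - z‖ ^ 2 ≤ ⟪g x, x - z⟫ := by
    have := hsc.add_inner_sub_add_le (hf x) z
    rw [← neg_sub x z, inner_neg_right, norm_neg] at this
    linarith
  have hexpand :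
      ‖x - τ • g x - z‖ ^ 2 = ‖x - z‖ ^ 2 - 2 * τ * ⟪g x, x - z⟫ + τ ^ 2 * ‖g x‖ ^ 2 := by
    rw [sub_right_comm, norm_sub_sq_real, real_inner_smul_right, norm_smul, Real.norm_eq_abs,
      abs_of_nonneg hτ, real_inner_comm]
    ring
  rw [hexpand]
  nlinarith [mul_le_mul_of_nonneg_left hinner (by positivity : (0:ℝ) ≤ 2 * τ),
    mul_le_mul_of_nonneg_left hgrad (sq_nonneg τ), mul_nonneg hτ hgap]

lemma add_sq_le_of_sq_le_one_sub {a b e s : ℝ} (hs : 0 < s) (hs1 : s ≤ 1)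
    (ha : a ^ 2 ≤ (1 - s) * e ^ 2) :
    (a + b) ^ 2 ≤ (1 - s / 2) * e ^ 2 + 2 / s * b ^ 2 := by
  have h2s : 0 < 2 - s := by linarith
  -- Young's inequality with weight `s / (2 - s)`, for which `2 / (2 - s) * (1 - s) ≤ 1 - s / 2`
  have hyoung : (a + b) ^ 2 ≤ 2 / (2 - s) * a ^ 2 + 2 / s * b ^ 2 := by
    rw [div_mul_eq_mul_div, div_mul_eq_mul_div, div_add_div _ _ h2s.ne' hs.ne',
      le_div_iff₀ (by positivity)]
    nlinarith [sq_nonneg (s * a - (2 - s) * b)]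
  have hweight : 2 / (2 - s) * a ^ 2 ≤ (1 - s / 2) * e ^ 2 := by
    rw [div_mul_eq_mul_div, div_le_iff₀ h2s]
    nlinarith [sq_nonneg s, sq_nonneg e]
  linarith

end Smooth

section PartialGradient

variable {d S : ℕ} {F : Wsp d → Lsp S → ℝ}

lemma hasGradientAt_gradW (hF : Differentiable ℝ (fun p : Wsp d × Lsp S => F p.1 p.2))
    (w : Wsp d) (l : Lsp S) : HasGradientAt (fun w' => F w' l) (gradW F w l) w := by
  have h := (hF (w, l)).hasFDerivAt.comp w (hasFDerivAt_prodMk_left (𝕜 := ℝ) w l)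
  exact h.differentiableAt.hasGradientAt

lemma gradW_eq_zero_of_forall_le {w₀ : Wsp d} {l : Lsp S} (h : ∀ w, F w₀ l ≤ F w l) :
    gradW F w₀ l = 0 := by
  have hmin : IsLocalMin (fun w => F w l) w₀ := Filter.Eventually.of_forall h
  simp [gradW, gradient, hmin.fderiv_eq_zero]

lemma differentiable_gradW_right (hF : ContDiff ℝ 2 (fun p : Wsp d × Lsp S => F p.1 p.2))
    (w : Wsp d) : Differentiable ℝ (fun l => gradW F w l) := by
  set Φ := fun p : Wsp d × Lsp S => F p.1 p.2
  have hΦ : Differentiable ℝ Φ := hF.differentiable (by norm_num)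
  -- over `ℝ` the conjugate-linear isometry `toDual` is linear, hence differentiable
  let toDualℝ : Wsp d ≃ₗᵢ[ℝ] StrongDual ℝ (Wsp d) := InnerProductSpace.toDual ℝ (Wsp d)
  have hgradW : (fun l => gradW F w l) = fun l =>
      toDualℝ.symm ((fderiv ℝ Φ (w, l)).comp (ContinuousLinearMap.inl ℝ (Wsp d) (Lsp S))) := by
    funext l
    have h := (hΦ (w, l)).hasFDerivAt.comp w (hasFDerivAt_prodMk_left (𝕜 := ℝ) w l)
    exact h.hasGradientAt.gradient
  rw [hgradW]
  have hfderiv : Differentiable ℝ (fderiv ℝ Φ) :=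
    (hF.fderiv_right (m := 1) (by norm_num)).differentiable one_ne_zero
  exact toDualℝ.symm.differentiable.comp
    ((hfderiv.comp (differentiable_const w |>.prodMk differentiable_id)).clm_comp
      (differentiable_const _))

lemma norm_minimizer_sub_le (hF : ContDiff ℝ 2 (fun p : Wsp d × Lsp S => F p.1 p.2))
    {C : Set (Lsp S)} (hC : Convex ℝ C) {wstar : Lsp S → Wsp d}
    (hwstar : ∀ l ∈ C, ∀ w, F (wstar l) l ≤ F w l)
    {μ M : ℝ} (hμ : 0 < μ) (hsc : ∀ l ∈ C, StrongConvexOn Set.univ μ (fun w => F w l))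
    (hbd : ∀ l₁ ∈ C, ∀ l₂ ∈ C, ‖hessWL F (wstar l₁) l₂‖ ≤ M)
    {l₁ l₂ : Lsp S} (h₁ : l₁ ∈ C) (h₂ : l₂ ∈ C) :
    ‖wstar l₁ - wstar l₂‖ ≤ M / μ * ‖l₁ - l₂‖ := by
  have hF1 : Differentiable ℝ (fun p : Wsp d × Lsp S => F p.1 p.2) :=
    hF.differentiable (by norm_num)
  have hmono := (hsc l₂ h₂).mul_norm_sub_le_norm_sub (hasGradientAt_gradW hF1 (wstar l₁) l₂)
    (hasGradientAt_gradW hF1 (wstar l₂) l₂)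
  have hmv : ‖gradW F (wstar l₁) l₂ - gradW F (wstar l₁) l₁‖ ≤ M * ‖l₂ - l₁‖ :=
    hC.norm_image_sub_le_of_norm_fderiv_le
      (fun l _ => (differentiable_gradW_right hF (wstar l₁)).differentiableAt)
      (fun l hl => hbd l₁ h₁ l hl) h₁ h₂
  rw [gradW_eq_zero_of_forall_le (hwstar l₂ h₂), sub_zero] at hmono
  rw [gradW_eq_zero_of_forall_le (hwstar l₁ h₁), sub_zero, norm_sub_rev] at hmv
  rw [div_mul_eq_mul_div, le_div_iff₀ hμ, mul_comm]
  exact hmono.trans hmv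

end PartialGradient

theorem lower_drift_badr_gd_general
    {d S : ℕ}
    (C : Set (Lsp S)) (hCconv : Convex ℝ C)
    (U F : Wsp d → Lsp S → ℝ)
    (hFdiff : ContDiff ℝ 2 (fun p : Wsp d × Lsp S => F p.1 p.2))
    (wstar : Lsp S → Wsp d)
    (hwstar : ∀ l ∈ C, ∀ w : Wsp d, F (wstar l) l ≤ F w l)
    -- Assumption F
    (μF LF1 MC : ℝ)
    (hμF : 0 < μF) (hLF1 : μF ≤ LF1)
    (hFsc : ∀ l ∈ C, StrongConvexOn Set.univ μF (fun w => F w l))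
    (hgradFlip : ∀ l ∈ C, ∀ w₁ w₂ : Wsp d, ‖gradW F w₁ l - gradW F w₂ l‖ ≤ LF1 * ‖w₁ - w₂‖)
    (hhessWLbd : ∀ l₁ ∈ C, ∀ l₂ ∈ C, ‖hessWL F (wstar l₁) l₂‖ ≤ MC)
    -- Euclidean projection onto `C`
    (proj : Lsp S → Lsp S)
    (hprojmem : ∀ x, proj x ∈ C)
    -- deterministic BADR-GD iterates
    (τ γ : ℝ) (hτpos : 0 < τ) (hγpos : 0 < γ)
    (w v : ℕ → Wsp d) (lam : ℕ → Lsp S) (hlam0 : lam 0 ∈ C)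
    (hwrec : ∀ t, w (t + 1) = w t - τ • gradW F (w t) (lam t))
    (hlamrec : ∀ t, lam (t + 1) = proj (lam t - γ • (gradL U (w t) (lam t) +
        ContinuousLinearMap.adjoint (hessWL F (w t) (lam t)) (v t))))
    (hτ : τ ≤ 1 / LF1)
    : ∀ t : ℕ,
      ‖w (t + 1) - wstar (lam (t + 1))‖ ^ 2 ≤
        (1 - τ * μF / 2) * ‖w t - wstar (lam t)‖ ^ 2 +
          (2 / (τ * μF)) * (MC / μF) ^ 2 * γ ^ 2 * ‖γ⁻¹ • (lam t - lam (t + 1))‖ ^ 2 := by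
  intro t
  have hlam : ∀ n, lam n ∈ C := fun n => n.casesOn hlam0 fun n => hlamrec n ▸ hprojmem _
  have hLF1pos : 0 < LF1 := hμF.trans_le hLF1
  have hτL : τ * LF1 ≤ 1 := (le_div_iff₀ hLF1pos).1 (by simpa using hτ)
  have hcontract :
      ‖w (t + 1) - wstar (lam t)‖ ^ 2 ≤ (1 - τ * μF) * ‖w t - wstar (lam t)‖ ^ 2 := by
    rw [hwrec t]
    exact norm_sub_smul_gradient_sub_sq_le (hFsc _ (hlam t))
      (hasGradientAt_gradW (hFdiff.differentiable (by norm_num)) · (lam t))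
      (hgradFlip _ (hlam t)) hLF1pos hτpos.le hτL (hwstar _ (hlam t)) (w t)
  have hdrift : ‖wstar (lam t) - wstar (lam (t + 1))‖ ≤ MC / μF * ‖lam t - lam (t + 1)‖ :=
    norm_minimizer_sub_le hFdiff hCconv hwstar hμF hFsc hhessWLbd (hlam t) (hlam (t + 1))
  have hτμ : τ * μF ≤ 1 := (mul_le_mul_of_nonneg_left hLF1 hτpos.le).trans hτL
  have hγ : γ ^ 2 * ‖γ⁻¹ • (lam t - lam (t + 1))‖ ^ 2 = ‖lam t - lam (t + 1)‖ ^ 2 := by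
    rw [norm_smul, norm_inv, Real.norm_of_nonneg hγpos.le, mul_pow, ← mul_assoc, ← mul_pow,
      mul_inv_cancel₀ hγpos.ne', one_pow, one_mul]
  calc ‖w (t + 1) - wstar (lam (t + 1))‖ ^ 2
      ≤ (‖w (t + 1) - wstar (lam t)‖ + ‖wstar (lam t) - wstar (lam (t + 1))‖) ^ 2 :=
        pow_le_pow_left₀ (norm_nonneg _) (norm_sub_le_norm_sub_add_norm_sub _ _ _) 2
    _ ≤ (1 - τ * μF / 2) * ‖w t - wstar (lam t)‖ ^ 2 +
          2 / (τ * μF) * ‖wstar (lam t) - wstar (lam (t + 1))‖ ^ 2 :=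
        add_sq_le_of_sq_le_one_sub (by positivity) hτμ hcontract
    _ ≤ (1 - τ * μF / 2) * ‖w t - wstar (lam t)‖ ^ 2 +
          2 / (τ * μF) * ((MC / μF) ^ 2 * ‖lam t - lam (t + 1)‖ ^ 2) := by
        rw [← mul_pow]
        gcongr
    _ = _ := by rw [← hγ]; ring

/-- Drift control of the lower variable of deterministic BADR-GD. -/
theorem lower_drift_badr_gd
    {d S : ℕ} (hd : 1 ≤ d) (hS : 1 ≤ S)
    (C : Set (Lsp S)) (hCne : C.Nonempty) (hCconv : Convex ℝ C) (hCcomp : IsCompact C)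
    (U F : Wsp d → Lsp S → ℝ)
    (hUdiff : ContDiff ℝ 1 (fun p : Wsp d × Lsp S => U p.1 p.2))
    (hFdiff : ContDiff ℝ 2 (fun p : Wsp d × Lsp S => F p.1 p.2))
    (wstar : Lsp S → Wsp d)
    (hwstar : ∀ l ∈ C, ∀ w : Wsp d, F (wstar l) l ≤ F w l)
    -- Assumption U
    (LU0 LU1 : ℝ) (hLU0 : 0 < LU0) (hLU1 : 0 < LU1)
    (hUlip : ∀ w₁ w₂ : Wsp d, ∀ l₁ ∈ C, ∀ l₂ ∈ C,
      |U w₁ l₁ - U w₂ l₂| ≤ LU0 * ‖((w₁, l₁) : Wsp d × Lsp S) - (w₂, l₂)‖)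
    (hgradUlip : ∀ w₁ w₂ : Wsp d, ∀ l₁ ∈ C, ∀ l₂ ∈ C,
      ‖fderiv ℝ (fun p : Wsp d × Lsp S => U p.1 p.2) (w₁, l₁) -
          fderiv ℝ (fun p : Wsp d × Lsp S => U p.1 p.2) (w₂, l₂)‖ ≤
        LU1 * (‖w₁ - w₂‖ + ‖l₁ - l₂‖))
    -- Assumption F
    (μF LF1 LF2ww MC LF2wl : ℝ)
    (hμF : 0 < μF) (hLF1 : μF ≤ LF1) (hLF2ww : 0 ≤ LF2ww) (hMC : 0 < MC) (hLF2wl : 0 < LF2wl)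
    (hFsc : ∀ l ∈ C, StrongConvexOn Set.univ μF (fun w => F w l))
    (hgradFlip : ∀ l ∈ C, ∀ w₁ w₂ : Wsp d, ‖gradW F w₁ l - gradW F w₂ l‖ ≤ LF1 * ‖w₁ - w₂‖)
    (hhessWWlip : ∀ w₁ w₂ : Wsp d, ∀ l₁ ∈ C, ∀ l₂ ∈ C,
      ‖hessWW F w₁ l₁ - hessWW F w₂ l₂‖ ≤ LF2ww * (‖w₁ - w₂‖ + ‖l₁ - l₂‖))
    (hhessWLbd : ∀ l₁ ∈ C, ∀ l₂ ∈ C, ‖hessWL F (wstar l₁) l₂‖ ≤ MC)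
    (hhessWLlip : ∀ w₁ w₂ : Wsp d, ∀ l₁ ∈ C, ∀ l₂ ∈ C,
      ‖hessWL F w₁ l₁ - hessWL F w₂ l₂‖ ≤ LF2wl * (‖w₁ - w₂‖ + ‖l₁ - l₂‖))
    -- Euclidean projection onto `C`
    (proj : Lsp S → Lsp S)
    (hprojmem : ∀ x, proj x ∈ C)
    (hprojmin : ∀ x, ∀ y ∈ C, ‖x - proj x‖ ≤ ‖x - y‖)
    -- deterministic BADR-GD iterates
    (τ ρ γ : ℝ) (hτpos : 0 < τ) (hρpos : 0 < ρ) (hγpos : 0 < γ)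
    (w v : ℕ → Wsp d) (lam : ℕ → Lsp S) (hlam0 : lam 0 ∈ C)
    (hwrec : ∀ t, w (t + 1) = w t - τ • gradW F (w t) (lam t))
    (hvrec : ∀ t, v (t + 1) = v t - ρ • (hessWW F (w t) (lam t) (v t) + gradW U (w t) (lam t)))
    (hlamrec : ∀ t, lam (t + 1) = proj (lam t - γ • (gradL U (w t) (lam t) +
        ContinuousLinearMap.adjoint (hessWL F (w t) (lam t)) (v t))))
    (hτ : τ ≤ 1 / LF1)
    : ∀ t : ℕ,
      ‖w (t + 1) - wstar (lam (t + 1))‖ ^ 2 ≤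
        (1 - τ * μF / 2) * ‖w t - wstar (lam t)‖ ^ 2 +
          (2 / (τ * μF)) * (MC / μF) ^ 2 * γ ^ 2 * ‖γ⁻¹ • (lam t - lam (t + 1))‖ ^ 2 :=
  lower_drift_badr_gd_general C hCconv U F hFdiff wstar hwstar μF LF1 MC hμF hLF1 hFsc hgradFlip
    hhessWLbd proj hprojmem τ γ hτpos hγpos w v lam hlam0 hwrec hlamrec hτ
end
end

section
/- Under Assumptions U and F, if the stepsize satisfies ρ ≤ 1/L^{ww}_{F,1}, then the dual iterates of deterministic BADR-GD satisfy, for every t ≥ 0: ‖v_t‖ ≤ 4L_{U,0}/(ρμ_F²) + ε_{v,0}, where ε_{v,0} := ‖v₀ − v*(w₀, λ₀)‖. -/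
/-!
Write the dual update as `v_{t+1} = (1 - ρ H_t) v_t - ρ g_t` with `H_t = ∇²_{ww}F(w_t, λ_t)` and
`g_t = ∇_w U(w_t, λ_t)`. Strong convexity and the Lipschitz gradient of `F(·, λ)` make `H_t`
symmetric with Rayleigh quotients in `[μ_F, L^{ww}_{F,1}]` (the lower bound is the second
derivative at `0`, nonnegative by convexity, of `t ↦ F(w + t u, λ) - μ_F / 2 ‖w + t u‖²`), so for
`ρ ≤ 1 / L^{ww}_{F,1}` the operator `1 - ρ H_t` has norm at most `1 - ρ μ_F`, while
`‖g_t‖ ≤ L_{U,0}` since `U` is `L_{U,0}`-Lipschitz. Then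
`‖v_{t+1}‖ ≤ (1 - ρ μ_F) ‖v_t‖ + ρ L_{U,0}` keeps `‖v_t‖ ≤ max (‖v_0‖, L_{U,0} / μ_F)`, and
`‖v_0‖ ≤ ε_{v,0} + ‖v*(w_0, λ_0)‖ ≤ ε_{v,0} + L_{U,0} / μ_F` by coercivity of `H_0`.
-/

open MeasureTheory Finset

noncomputable section

open InnerProductSpace Set

section Operators

variable {E : Type*} [NormedAddCommGroup E] [InnerProductSpace ℝ E]

namespace ContinuousLinearMap

theorem norm_le_of_abs_inner_self_le {T : E →L[ℝ] E} (hT : (T : E →ₗ[ℝ] E).IsSymmetric)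
    {c : ℝ} (hc : 0 ≤ c) (h : ∀ x, |⟪T x, x⟫_ℝ| ≤ c * ‖x‖ ^ 2) : ‖T‖ ≤ c := by
  rw [T.norm_eq_iSup_rayleighQuotient hT]
  refine ciSup_le fun x => ?_
  rcases eq_or_ne x 0 with rfl | hx
  · simpa using hc
  rw [rayleighQuotient, reApplyInnerSelf_apply, RCLike.re_to_real, abs_div, abs_sq,
    div_le_iff₀ (by positivity)]
  exact h x

theorem norm_one_sub_smul_le {T : E →L[ℝ] E} (hT : (T : E →ₗ[ℝ] E).IsSymmetric)
    {μ L ρ : ℝ} (hcoer : ∀ x, μ * ‖x‖ ^ 2 ≤ ⟪T x, x⟫_ℝ) (hTL : ‖T‖ ≤ L) (hμL : μ ≤ L)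
    (hρ : 0 ≤ ρ) (hρL : ρ * L ≤ 1) : ‖1 - ρ • T‖ ≤ 1 - ρ * μ := by
  have hsymm : ((1 - ρ • T : E →L[ℝ] E) : E →ₗ[ℝ] E).IsSymmetric := fun x y => by
    have hTxy : ⟪T x, y⟫_ℝ = ⟪x, T y⟫_ℝ := hT x y
    simp only [coe_coe, sub_apply, one_apply_eq_self, smul_apply, inner_sub_left,
      inner_sub_right, real_inner_smul_left, real_inner_smul_right, hTxy]
  refine norm_le_of_abs_inner_self_le hsymm (by nlinarith) fun x => ?_
  have hupper : ⟪T x, x⟫_ℝ ≤ L * ‖x‖ ^ 2 :=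
    (real_inner_le_norm _ _).trans <| by
      nlinarith [T.le_opNorm x, norm_nonneg x, norm_nonneg (T x)]
  simp only [sub_apply, one_apply_eq_self, smul_apply, inner_sub_left, real_inner_smul_left,
    real_inner_self_eq_norm_sq]
  rw [abs_le]
  constructor <;> nlinarith [hcoer x, sq_nonneg ‖x‖]

end ContinuousLinearMap

theorem mul_norm_le_norm_apply_of_coercive {T : E → E} {μ : ℝ}
    (hcoer : ∀ x, μ * ‖x‖ ^ 2 ≤ ⟪T x, x⟫_ℝ) (x : E) : μ * ‖x‖ ≤ ‖T x‖ := by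
  rcases (norm_nonneg x).eq_or_lt with hx | hx
  · rw [← hx, mul_zero]
    exact norm_nonneg _
  refine le_of_mul_le_mul_right ?_ hx
  calc μ * ‖x‖ * ‖x‖ = μ * ‖x‖ ^ 2 := by ring
    _ ≤ ⟪T x, x⟫_ℝ := hcoer x
    _ ≤ ‖T x‖ * ‖x‖ := real_inner_le_norm _ _

end Operators

section Calculus

variable {E : Type*} [NormedAddCommGroup E] [InnerProductSpace ℝ E] {f : E → ℝ}

theorem StrongConvexOn.mul_norm_sq_le_fderiv_fderiv_apply {μ : ℝ}
    (hsc : StrongConvexOn univ μ f) (hf : ContDiff ℝ 2 f) (x v : E) :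
    μ * ‖v‖ ^ 2 ≤ fderiv ℝ (fderiv ℝ f) x v v := by
  have hdf : Differentiable ℝ f := hf.differentiable two_ne_zero
  have hd2f : Differentiable ℝ (fderiv ℝ f) :=
    (hf.fderiv_right one_add_one_eq_two.le).differentiable one_ne_zero
  set line : ℝ → E := fun t => x + t • v
  have hline : ∀ t, HasDerivAt line v t := fun t =>
    (((hasDerivAt_id t).smul_const v).const_add x).congr_deriv (one_smul ℝ v)
  set φ : ℝ → ℝ := fun t => f (line t) - μ / 2 * ‖line t‖ ^ 2
  set φ' : ℝ → ℝ := fun t => fderiv ℝ f (line t) v - μ * ⟪line t, v⟫_ℝ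
  have hφ : ∀ t, HasDerivAt φ (φ' t) t := fun t => by
    refine (((hdf _).hasFDerivAt.comp_hasDerivAt t (hline t)).sub
      (((hline t).norm_sq).const_mul (μ / 2))).congr_deriv ?_
    simp only [φ']
    ring
  have hmono : Monotone φ' := by
    have hconv : ConvexOn ℝ univ φ := by
      have hcomp : φ = (fun y => f y - μ / 2 * ‖y‖ ^ 2) ∘ AffineMap.lineMap x (x + v) := by
        funext t
        simp [φ, line, AffineMap.lineMap_apply_module', add_comm]
      rw [hcomp]
      exact (strongConvexOn_iff_convex.mp hsc).comp_affineMap _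
    have := hconv.monotoneOn_deriv fun t _ => (hφ t).differentiableAt
    rwa [funext fun t => (hφ t).deriv, monotoneOn_univ] at this
  have hφ' : HasDerivAt φ' (fderiv ℝ (fderiv ℝ f) x v v - μ * ‖v‖ ^ 2) 0 := by
    have h0 : line 0 = x := by simp [line]
    have hD : HasDerivAt (fun t => fderiv ℝ f (line t)) (fderiv ℝ (fderiv ℝ f) x v) 0 := by
      have := (hd2f (line 0)).hasFDerivAt.comp_hasDerivAt 0 (hline 0)
      rwa [h0] at this
    refine ((hD.clm_apply (hasDerivAt_const 0 v)).sub
      (((hline 0).inner ℝ (hasDerivAt_const 0 v)).const_mul μ)).congr_deriv ?_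
    simp
  have := hmono.deriv_nonneg (x := 0)
  rw [hφ'.deriv] at this
  linarith

end Calculus

section Gradient

variable {E : Type*} [NormedAddCommGroup E] [InnerProductSpace ℝ E] [CompleteSpace E]
  {f : E → ℝ} {x : E}

theorem norm_gradient_le_of_lip {C : ℝ} (hC : 0 ≤ C) (hlip : ∀ y, |f y - f x| ≤ C * ‖y - x‖) :
    ‖gradient f x‖ ≤ C := by
  rw [← (toDual ℝ E).norm_map, toDual_gradient]
  exact norm_fderiv_le_of_lip' ℝ hC (Filter.Eventually.of_forall hlip)

theorem inner_fderiv_gradient_apply (hf : DifferentiableAt ℝ (fderiv ℝ f) x) (u w : E) :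
    ⟪fderiv ℝ (gradient f) x u, w⟫_ℝ = fderiv ℝ (fderiv ℝ f) x u w := by
  -- over `ℝ` the conjugate-linear Riesz isomorphism is linear
  let J : StrongDual ℝ E →L[ℝ] E := (toDual ℝ E).symm.toLinearIsometry.toContinuousLinearMap
  have hgrad : HasFDerivAt (gradient f) (J.comp (fderiv ℝ (fderiv ℝ f) x)) x :=
    J.hasFDerivAt.comp x hf.hasFDerivAt
  rw [hgrad.fderiv]
  exact toDual_symm_apply

theorem isSymmetric_fderiv_gradient (hf : ContDiff ℝ 2 f) (x : E) :
    (fderiv ℝ (gradient f) x : E →ₗ[ℝ] E).IsSymmetric := fun u w => by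
  have hd2f : DifferentiableAt ℝ (fderiv ℝ f) x :=
    (hf.fderiv_right one_add_one_eq_two.le).differentiable one_ne_zero x
  rw [ContinuousLinearMap.coe_coe, inner_fderiv_gradient_apply hd2f, real_inner_comm,
    inner_fderiv_gradient_apply hd2f]
  exact hf.contDiffAt.isSymmSndFDerivAt (by simp) u w

theorem StrongConvexOn.mul_norm_sq_le_inner_fderiv_gradient {μ : ℝ}
    (hsc : StrongConvexOn univ μ f) (hf : ContDiff ℝ 2 f) (x u : E) :
    μ * ‖u‖ ^ 2 ≤ ⟪fderiv ℝ (gradient f) x u, u⟫_ℝ := by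
  rw [inner_fderiv_gradient_apply
    ((hf.fderiv_right one_add_one_eq_two.le).differentiable one_ne_zero x)]
  exact hsc.mul_norm_sq_le_fderiv_fderiv_apply hf x u

theorem StrongConvexOn.norm_one_sub_smul_fderiv_gradient_le {μ L ρ : ℝ}
    (hsc : StrongConvexOn univ μ f) (hf : ContDiff ℝ 2 f)
    (hlip : ∀ y z, ‖gradient f y - gradient f z‖ ≤ L * ‖y - z‖) (hμ : 0 ≤ μ) (hμL : μ ≤ L)
    (hρ : 0 ≤ ρ) (hρL : ρ * L ≤ 1) (x : E) :
    ‖1 - ρ • fderiv ℝ (gradient f) x‖ ≤ 1 - ρ * μ :=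
  ContinuousLinearMap.norm_one_sub_smul_le (isSymmetric_fderiv_gradient hf x)
    (hsc.mul_norm_sq_le_inner_fderiv_gradient hf x)
    (norm_fderiv_le_of_lip' ℝ (hμ.trans hμL) (Filter.Eventually.of_forall fun y => hlip y x))
    hμL hρ hρL

end Gradient

theorem le_max_of_le_mul_add {a : ℕ → ℝ} {q b : ℝ} (hq0 : 0 ≤ q) (hq1 : q < 1)
    (h : ∀ t, a (t + 1) ≤ q * a t + b) (t : ℕ) : a t ≤ max (a 0) (b / (1 - q)) := by
  induction t with
  | zero => exact le_max_left _ _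
  | succ t ih =>
    have hb : b ≤ (1 - q) * max (a 0) (b / (1 - q)) := by
      rw [← div_le_iff₀' (sub_pos.2 hq1)]
      exact le_max_right _ _
    nlinarith [h t, mul_le_mul_of_nonneg_left ih hq0]

theorem norm_sub_smul_apply_add_le {E : Type*} [NormedAddCommGroup E] [NormedSpace ℝ E]
    (A : E →L[ℝ] E) (x g : E) {ρ : ℝ} (hρ : 0 ≤ ρ) :
    ‖x - ρ • (A x + g)‖ ≤ ‖1 - ρ • A‖ * ‖x‖ + ρ * ‖g‖ := by
  have hsplit : x - ρ • (A x + g) = (1 - ρ • A) x - ρ • g := by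
    simp only [sub_apply, one_apply_eq_self, smul_apply, smul_add]
    abel
  calc ‖x - ρ • (A x + g)‖ ≤ ‖(1 - ρ • A) x‖ + ‖ρ • g‖ := hsplit ▸ norm_sub_le _ _
    _ ≤ ‖1 - ρ • A‖ * ‖x‖ + ρ * ‖g‖ := by
      rw [norm_smul, Real.norm_of_nonneg hρ]
      exact add_le_add_left ((1 - ρ • A).le_opNorm x) _

theorem norm_le_max_of_forall_eq_sub_smul_add {E : Type*} [NormedAddCommGroup E]
    [NormedSpace ℝ E] {A : ℕ → E →L[ℝ] E} {g v : ℕ → E} {ρ μ G : ℝ} (hρ : 0 < ρ) (hμ : 0 < μ)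
    (hρμ : ρ * μ ≤ 1) (hA : ∀ t, ‖1 - ρ • A t‖ ≤ 1 - ρ * μ) (hg : ∀ t, ‖g t‖ ≤ G)
    (hv : ∀ t, v (t + 1) = v t - ρ • (A t (v t) + g t)) (t : ℕ) :
    ‖v t‖ ≤ max ‖v 0‖ (G / μ) := by
  have hstep : ∀ t, ‖v (t + 1)‖ ≤ (1 - ρ * μ) * ‖v t‖ + ρ * G := fun t => by
    rw [hv]
    exact (norm_sub_smul_apply_add_le _ _ _ hρ.le).trans (add_le_add
      (mul_le_mul_of_nonneg_right (hA t) (norm_nonneg _)) (mul_le_mul_of_nonneg_left (hg t) hρ.le))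
  have := le_max_of_le_mul_add (a := fun t => ‖v t‖) (sub_nonneg.2 hρμ)
    (sub_lt_self _ (mul_pos hρ hμ)) hstep t
  rwa [sub_sub_cancel, mul_div_mul_left _ _ hρ.ne'] at this

theorem dual_bounded_badr_gd_general
    {d S : ℕ}
    (C : Set (Lsp S))
    (U F : Wsp d → Lsp S → ℝ)
    (hFdiff : ContDiff ℝ 2 (fun p : Wsp d × Lsp S => F p.1 p.2))
    -- Assumption U
    (LU0 : ℝ) (hLU0 : 0 < LU0)
    (hUlip : ∀ w₁ w₂ : Wsp d, ∀ l₁ ∈ C, ∀ l₂ ∈ C,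
      |U w₁ l₁ - U w₂ l₂| ≤ LU0 * ‖((w₁, l₁) : Wsp d × Lsp S) - (w₂, l₂)‖)
    -- Assumption F
    (μF LF1 : ℝ)
    (hμF : 0 < μF) (hLF1 : μF ≤ LF1)
    (hFsc : ∀ l ∈ C, StrongConvexOn Set.univ μF (fun w => F w l))
    (hgradFlip : ∀ l ∈ C, ∀ w₁ w₂ : Wsp d, ‖gradW F w₁ l - gradW F w₂ l‖ ≤ LF1 * ‖w₁ - w₂‖)
    -- the dual solution `v*(w, λ)`, characterized by `∇²_{ww}F(w,λ) v*(w,λ) = ∇_w U(w,λ)`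
    (vstar : Wsp d → Lsp S → Wsp d)
    (hvstar : ∀ w : Wsp d, ∀ l ∈ C, hessWW F w l (vstar w l) = gradW U w l)
    -- Euclidean projection onto `C`
    (proj : Lsp S → Lsp S)
    (hprojmem : ∀ x, proj x ∈ C)
    -- deterministic BADR-GD iterates
    (ρ γ : ℝ) (hρpos : 0 < ρ)
    (w v : ℕ → Wsp d) (lam : ℕ → Lsp S) (hlam0 : lam 0 ∈ C)
    (hvrec : ∀ t, v (t + 1) = v t - ρ • (hessWW F (w t) (lam t) (v t) + gradW U (w t) (lam t)))
    (hlamrec : ∀ t, lam (t + 1) = proj (lam t - γ • (gradL U (w t) (lam t) +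
        ContinuousLinearMap.adjoint (hessWL F (w t) (lam t)) (v t))))
    (hρ : ρ ≤ 1 / LF1)
    : ∀ t : ℕ, ‖v t‖ ≤ 4 * LU0 / (ρ * μF ^ 2) + ‖v 0 - vstar (w 0) (lam 0)‖ := by
  have hρLF1 : ρ * LF1 ≤ 1 := (le_div_iff₀ (hμF.trans_le hLF1)).mp hρ
  have hρμF : ρ * μF ≤ 1 := (mul_le_mul_of_nonneg_left hLF1 hρpos.le).trans hρLF1
  have hlamC : ∀ t, lam t ∈ C
    | 0 => hlam0
    | t + 1 => hlamrec t ▸ hprojmem _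
  have hFl : ∀ l, ContDiff ℝ 2 (fun w => F w l) := fun l =>
    hFdiff.comp (contDiff_id.prodMk contDiff_const)
  have hgradU : ∀ w, ∀ l ∈ C, ‖gradW U w l‖ ≤ LU0 := fun w l hl =>
    norm_gradient_le_of_lip hLU0.le fun y => by simpa using hUlip y w l hl l hl
  have hvstar0 : ‖vstar (w 0) (lam 0)‖ ≤ LU0 / μF := by
    refine (le_div_iff₀' hμF).2 <| (mul_norm_le_norm_apply_of_coercive
      ((hFsc _ hlam0).mul_norm_sq_le_inner_fderiv_gradient (hFl _) (w 0)) _).trans ?_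
    exact (hvstar _ _ hlam0).symm ▸ hgradU _ _ hlam0
  have hconst : 2 * (LU0 / μF) ≤ 4 * LU0 / (ρ * μF ^ 2) := by
    rw [mul_div_assoc', div_le_div_iff₀ hμF (by positivity)]
    nlinarith [mul_le_mul_of_nonneg_left hρμF (mul_pos hLU0 hμF).le, mul_pos hLU0 hμF]
  intro t
  calc ‖v t‖ ≤ max ‖v 0‖ (LU0 / μF) :=
        norm_le_max_of_forall_eq_sub_smul_add hρpos hμF hρμF
          (fun t => (hFsc _ (hlamC t)).norm_one_sub_smul_fderiv_gradient_le (hFl _)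
            (hgradFlip _ (hlamC t)) hμF.le hLF1 hρpos.le hρLF1 _)
          (fun t => hgradU _ _ (hlamC t)) hvrec t
    _ ≤ ‖v 0‖ + LU0 / μF := max_le_add_of_nonneg (norm_nonneg _) (by positivity)
    _ ≤ 4 * LU0 / (ρ * μF ^ 2) + ‖v 0 - vstar (w 0) (lam 0)‖ := by
      linarith [norm_le_norm_sub_add (v 0) (vstar (w 0) (lam 0))]

/-- Uniform boundedness of the dual variable of deterministic BADR-GD. -/
theorem dual_bounded_badr_gd
    {d S : ℕ} (hd : 1 ≤ d) (hS : 1 ≤ S)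
    (C : Set (Lsp S)) (hCne : C.Nonempty) (hCconv : Convex ℝ C) (hCcomp : IsCompact C)
    (U F : Wsp d → Lsp S → ℝ)
    (hUdiff : ContDiff ℝ 1 (fun p : Wsp d × Lsp S => U p.1 p.2))
    (hFdiff : ContDiff ℝ 2 (fun p : Wsp d × Lsp S => F p.1 p.2))
    (wstar : Lsp S → Wsp d)
    (hwstar : ∀ l ∈ C, ∀ w : Wsp d, F (wstar l) l ≤ F w l)
    -- Assumption U
    (LU0 LU1 : ℝ) (hLU0 : 0 < LU0) (hLU1 : 0 < LU1)
    (hUlip : ∀ w₁ w₂ : Wsp d, ∀ l₁ ∈ C, ∀ l₂ ∈ C,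
      |U w₁ l₁ - U w₂ l₂| ≤ LU0 * ‖((w₁, l₁) : Wsp d × Lsp S) - (w₂, l₂)‖)
    (hgradUlip : ∀ w₁ w₂ : Wsp d, ∀ l₁ ∈ C, ∀ l₂ ∈ C,
      ‖fderiv ℝ (fun p : Wsp d × Lsp S => U p.1 p.2) (w₁, l₁) -
          fderiv ℝ (fun p : Wsp d × Lsp S => U p.1 p.2) (w₂, l₂)‖ ≤
        LU1 * (‖w₁ - w₂‖ + ‖l₁ - l₂‖))
    -- Assumption F
    (μF LF1 LF2ww MC LF2wl : ℝ)
    (hμF : 0 < μF) (hLF1 : μF ≤ LF1) (hLF2ww : 0 ≤ LF2ww) (hMC : 0 < MC) (hLF2wl : 0 < LF2wl)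
    (hFsc : ∀ l ∈ C, StrongConvexOn Set.univ μF (fun w => F w l))
    (hgradFlip : ∀ l ∈ C, ∀ w₁ w₂ : Wsp d, ‖gradW F w₁ l - gradW F w₂ l‖ ≤ LF1 * ‖w₁ - w₂‖)
    (hhessWWlip : ∀ w₁ w₂ : Wsp d, ∀ l₁ ∈ C, ∀ l₂ ∈ C,
      ‖hessWW F w₁ l₁ - hessWW F w₂ l₂‖ ≤ LF2ww * (‖w₁ - w₂‖ + ‖l₁ - l₂‖))
    (hhessWLbd : ∀ l₁ ∈ C, ∀ l₂ ∈ C, ‖hessWL F (wstar l₁) l₂‖ ≤ MC)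
    (hhessWLlip : ∀ w₁ w₂ : Wsp d, ∀ l₁ ∈ C, ∀ l₂ ∈ C,
      ‖hessWL F w₁ l₁ - hessWL F w₂ l₂‖ ≤ LF2wl * (‖w₁ - w₂‖ + ‖l₁ - l₂‖))
    -- the dual solution `v*(w, λ)`, characterized by `∇²_{ww}F(w,λ) v*(w,λ) = ∇_w U(w,λ)`
    (vstar : Wsp d → Lsp S → Wsp d)
    (hvstar : ∀ w : Wsp d, ∀ l ∈ C, hessWW F w l (vstar w l) = gradW U w l)
    -- Euclidean projection onto `C`
    (proj : Lsp S → Lsp S)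
    (hprojmem : ∀ x, proj x ∈ C)
    (hprojmin : ∀ x, ∀ y ∈ C, ‖x - proj x‖ ≤ ‖x - y‖)
    -- deterministic BADR-GD iterates
    (τ ρ γ : ℝ) (hτpos : 0 < τ) (hρpos : 0 < ρ) (hγpos : 0 < γ)
    (w v : ℕ → Wsp d) (lam : ℕ → Lsp S) (hlam0 : lam 0 ∈ C)
    (hwrec : ∀ t, w (t + 1) = w t - τ • gradW F (w t) (lam t))
    (hvrec : ∀ t, v (t + 1) = v t - ρ • (hessWW F (w t) (lam t) (v t) + gradW U (w t) (lam t)))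
    (hlamrec : ∀ t, lam (t + 1) = proj (lam t - γ • (gradL U (w t) (lam t) +
        ContinuousLinearMap.adjoint (hessWL F (w t) (lam t)) (v t))))
    (hρ : ρ ≤ 1 / LF1)
    : ∀ t : ℕ, ‖v t‖ ≤ 4 * LU0 / (ρ * μF ^ 2) + ‖v 0 - vstar (w 0) (lam 0)‖ :=
  dual_bounded_badr_gd_general C U F hFdiff LU0 hLU0 hUlip μF LF1 hμF hLF1 hFsc hgradFlip vstar
    hvstar proj hprojmem ρ γ hρpos w v lam hlam0 hvrec hlamrec hρ
end
end
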